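/- arXiv:2502.04799 — 4 statements merged into one kernel-verified Lean document; each statement's English description precedes it below -/
import Mathlib

section
/- Let $x, x^* \in \mathbb{R}^n$, $\varphi$ twice continuously differentiable with $L_H$-Lipschitz Hessian, $\nabla\varphi(x^*) = 0$, $\nabla^2\varphi(x^*) \succeq \alpha I$, and $x \in B_{\delta_0}(x^*)$ with $\delta_0 = \frac{\alpha}{2L_H}$. Let $H = \nabla^2\varphi(x)$, $\epsilon > 0$, $\tilde\eta \leq \epsilon$, and suppose $d$ satisfies $\|(H + 2\epsilon I)d + \nabla\varphi(x)\| \leq \tilde\eta\|\nabla\varphi(x)\|$. Then $\|x^* - (x+d)\| \leq \frac{2}{\alpha}\big(L_H\|x^*-x\|^2 + 2\epsilon\|x^*-x\| + 2\epsilon\|\nabla\varphi(x)\|\big)$. -/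
/-!
Write `H = ∇²φ(x)`, `e = x* - (x + d)` and `w = (H + 2ε) e`. Since `∇φ(x*) = 0`,
`w = (∇φ(x) + H (x* - x)) + 2ε (x* - x) - ((H + 2ε) d + ∇φ(x))`; the first term is a Taylor
remainder of size `≤ L_H ‖x* - x‖²`, the last is the inexactness residual of size `≤ 2ε ‖∇φ(x)‖`.
On the other hand the Hessian moves by at most `L_H ‖x - x*‖ ≤ α / 2` between `x*` and `x`, so
`⟪w, e⟫ ≥ (α / 2) ‖e‖²`, whence `‖e‖ ≤ (2 / α) ‖w‖`.
-/

open InnerProductSpace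

theorem ContDiff.differentiable_gradient {E : Type*} [NormedAddCommGroup E]
    [InnerProductSpace ℝ E] [CompleteSpace E] {φ : E → ℝ} (hφ : ContDiff ℝ 2 φ) :
    Differentiable ℝ (gradient φ) :=
  ((toDual ℝ E).symm.toContinuousLinearEquiv.contDiff.comp
    (hφ.fderiv_right (m := 1) (by norm_num))).differentiable one_ne_zero

theorem norm_sub_sub_fderiv_le_of_lipschitz_fderiv {E F : Type*} [NormedAddCommGroup E]
    [NormedSpace ℝ E] [NormedAddCommGroup F] [NormedSpace ℝ F] {f : E → F} {L : ℝ}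
    (hf : Differentiable ℝ f) (hL : 0 ≤ L) (x y : E)
    (hLip : ∀ u, ‖fderiv ℝ f u - fderiv ℝ f x‖ ≤ L * ‖u - x‖) :
    ‖f y - f x - fderiv ℝ f x (y - x)‖ ≤ L * ‖y - x‖ ^ 2 := by
  have hball : ∀ u ∈ Metric.closedBall x ‖y - x‖, ‖fderiv ℝ f u - fderiv ℝ f x‖ ≤ L * ‖y - x‖ :=
    fun u hu => (hLip u).trans (by rw [Metric.mem_closedBall, dist_eq_norm] at hu; gcongr)
  calc ‖f y - f x - fderiv ℝ f x (y - x)‖ ≤ L * ‖y - x‖ * ‖y - x‖ :=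
        (convex_closedBall x _).norm_image_sub_le_of_norm_fderiv_le' (fun u _ => hf u) hball
          (Metric.mem_closedBall_self (norm_nonneg _)) (by simp [dist_eq_norm])
    _ = L * ‖y - x‖ ^ 2 := by ring

theorem sub_mul_sq_norm_le_inner_of_norm_sub_le {E : Type*} [NormedAddCommGroup E]
    [InnerProductSpace ℝ E] {S T : E →L[ℝ] E} {α β : ℝ}
    (hS : ∀ v, α * ‖v‖ ^ 2 ≤ inner ℝ (S v) v) (hTS : ‖T - S‖ ≤ β) (v : E) :
    (α - β) * ‖v‖ ^ 2 ≤ inner ℝ (T v) v := by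
  have hdiff : |inner ℝ ((T - S) v) v| ≤ β * ‖v‖ ^ 2 :=
    calc |inner ℝ ((T - S) v) v| ≤ ‖(T - S) v‖ * ‖v‖ := abs_real_inner_le_norm _ _
      _ ≤ ‖T - S‖ * ‖v‖ * ‖v‖ := by gcongr; exact (T - S).le_opNorm v
      _ ≤ β * ‖v‖ ^ 2 := by rw [mul_assoc, ← sq]; gcongr
  have hsplit : inner ℝ (T v) v = inner ℝ (S v) v + inner ℝ ((T - S) v) v := by
    rw [← inner_add_left, ← add_apply, add_sub_cancel]
  linarith [hS v, (abs_le.mp hdiff).1]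

theorem mul_norm_le_norm_of_mul_sq_norm_le_inner {E : Type*} [NormedAddCommGroup E]
    [InnerProductSpace ℝ E] {c : ℝ} {v w : E} (h : c * ‖v‖ ^ 2 ≤ inner ℝ w v) :
    c * ‖v‖ ≤ ‖w‖ := by
  rcases (norm_nonneg v).eq_or_lt with hv | hv
  · rw [← hv, mul_zero]; exact norm_nonneg w
  · have : c * ‖v‖ * ‖v‖ ≤ ‖w‖ * ‖v‖ := by
      linarith [real_inner_le_norm w v, show c * ‖v‖ ^ 2 = c * ‖v‖ * ‖v‖ by ring]
    exact le_of_mul_le_mul_right this hv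

theorem stmt12 {n : ℕ} (φ : EuclideanSpace ℝ (Fin n) → ℝ) (LH α ε η : ℝ)
    (xstar x d : EuclideanSpace ℝ (Fin n))
    (hφ : ContDiff ℝ 2 φ) (hLH : 0 < LH) (hα : 0 < α)
    (hLip : ∀ u v, ‖fderiv ℝ (gradient φ) u - fderiv ℝ (gradient φ) v‖ ≤ LH * ‖u - v‖)
    (hgrad : gradient φ xstar = 0)
    (hpd : ∀ v, α * ‖v‖ ^ 2 ≤ (inner ℝ (fderiv ℝ (gradient φ) xstar v) v : ℝ))
    (hx : ‖x - xstar‖ ≤ α / (2 * LH))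
    (hε : 0 < ε) (hη : η ≤ ε)
    (hd : ‖fderiv ℝ (gradient φ) x d + (2 * ε) • d + gradient φ x‖ ≤ η * ‖gradient φ x‖) :
    ‖xstar - (x + d)‖ ≤
      2 / α * (LH * ‖xstar - x‖ ^ 2 + 2 * ε * ‖xstar - x‖ + 2 * ε * ‖gradient φ x‖) := by
  set g := gradient φ
  set H := fderiv ℝ g x
  set e := xstar - (x + d)
  have htaylor : ‖g x + H (xstar - x)‖ ≤ LH * ‖xstar - x‖ ^ 2 := by
    have : ‖g xstar - g x - H (xstar - x)‖ ≤ LH * ‖xstar - x‖ ^ 2 :=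
      norm_sub_sub_fderiv_le_of_lipschitz_fderiv hφ.differentiable_gradient hLH.le x xstar
        (hLip · x)
    rwa [hgrad, zero_sub, ← neg_add', norm_neg] at this
  have hclose : ‖H - fderiv ℝ g xstar‖ ≤ α / 2 :=
    (hLip x xstar).trans <| by
      calc LH * ‖x - xstar‖ ≤ LH * (α / (2 * LH)) := by gcongr
        _ = α / 2 := by field_simp
  have hcoercive : α / 2 * ‖e‖ ^ 2 ≤ inner ℝ (H e + (2 * ε) • e) e := by
    have := sub_mul_sq_norm_le_inner_of_norm_sub_le hpd hclose e
    rw [inner_add_left, real_inner_smul_left, real_inner_self_eq_norm_sq]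
    nlinarith [sq_nonneg ‖e‖]
  have hsplit : H e + (2 * ε) • e =
      (g x + H (xstar - x)) + (2 * ε) • (xstar - x) - (H d + (2 * ε) • d + g x) := by
    simp only [e, show xstar - (x + d) = (xstar - x) - d by abel, map_sub, smul_sub]
    abel
  have hresidual : ‖H d + (2 * ε) • d + g x‖ ≤ 2 * ε * ‖g x‖ :=
    hd.trans (by gcongr; linarith)
  have hw : ‖H e + (2 * ε) • e‖ ≤
      LH * ‖xstar - x‖ ^ 2 + 2 * ε * ‖xstar - x‖ + 2 * ε * ‖g x‖ := by
    rw [hsplit]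
    refine (norm_sub_le _ _).trans ((add_le_add (norm_add_le _ _) hresidual).trans ?_)
    rw [norm_smul, Real.norm_of_nonneg (by positivity)]
    linarith
  have := mul_norm_le_norm_of_mul_sq_norm_le_inner hcoercive
  rw [div_mul_eq_mul_div, le_div_iff₀ hα]
  linarith
end

section
/- Let $\varphi$ be twice continuously differentiable with $L_H$-Lipschitz Hessian. Let $x \in \mathbb{R}^n$, $H = \nabla^2\varphi(x)$, $M > 0$, $\mu \in (0, 1/2)$, $\beta \in (0,1)$, and let $d \in \mathbb{R}^n$ satisfy $d^\top H d = -M\|d\|^3$ and $d^\top\nabla\varphi(x) \leq 0$. If for some integer $j \geq 0$ the Armijo-type condition $\varphi(x + \beta^j d) \leq \varphi(x) - M\mu\beta^{2j}\|d\|^3$ fails, then $\beta^j > \frac{3M(1 - 2\mu)}{L_H}$. -/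
/-!
Along the ray `t ↦ x + t • s` the Hessian quadratic form drifts by at most `L t ‖s‖³`, so
integrating twice gives the cubic upper bound
`φ (x + s) ≤ φ x + ⟪∇φ x, s⟫ + ⟪H s, s⟫ / 2 + L ‖s‖³ / 6`.
At `s = βʲ d` the linear term is nonpositive and the quadratic one equals `-M β²ʲ ‖d‖³ / 2`,
so a failed Armijo test `-μ M β²ʲ ‖d‖³ < φ (x + βʲ d) - φ x` forces
`-μ M < -M / 2 + L βʲ / 6` after dividing by `β²ʲ ‖d‖³`.
-/

open Set InnerProductSpace
open scoped RealInnerProductSpace Gradient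

theorem le_of_hasDerivAt_le_on_Ici {u v u' v' : ℝ → ℝ}
    (hu : ∀ t, HasDerivAt u (u' t) t) (hv : ∀ t, HasDerivAt v (v' t) t)
    (h0 : u 0 ≤ v 0) (hle : ∀ t, 0 ≤ t → u' t ≤ v' t) {t : ℝ} (ht : 0 ≤ t) :
    u t ≤ v t := by
  have hmono : MonotoneOn (v - u) (Ici 0) :=
    monotoneOn_of_hasDerivWithinAt_nonneg (convex_Ici 0)
      (fun s _ => ((hv s).sub (hu s)).continuousAt.continuousWithinAt)
      (fun s _ => ((hv s).sub (hu s)).hasDerivWithinAt)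
      (fun s hs => sub_nonneg.2 (hle s (interior_subset hs)))
  have := hmono self_mem_Ici ht ht
  simp only [Pi.sub_apply] at this
  linarith

theorem le_taylor_two_add_cubic_of_hasDerivAt {g g' g'' : ℝ → ℝ} {K : ℝ}
    (hg : ∀ t, HasDerivAt g (g' t) t) (hg' : ∀ t, HasDerivAt g' (g'' t) t)
    (hK : ∀ t, 0 ≤ t → g'' t ≤ g'' 0 + K * t) {t : ℝ} (ht : 0 ≤ t) :
    g t ≤ g 0 + g' 0 * t + g'' 0 / 2 * t ^ 2 + K / 6 * t ^ 3 := by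
  have hq : ∀ s, HasDerivAt (fun s => g' 0 + g'' 0 * s + K / 2 * s ^ 2) (g'' 0 + K * s) s := by
    intro s
    refine ((((hasDerivAt_id' s).const_mul (g'' 0)).const_add (g' 0)).add
      ((hasDerivAt_pow 2 s).const_mul (K / 2))).congr_deriv ?_
    push_cast
    ring
  have hp : ∀ s, HasDerivAt (fun s => g 0 + g' 0 * s + g'' 0 / 2 * s ^ 2 + K / 6 * s ^ 3)
      (g' 0 + g'' 0 * s + K / 2 * s ^ 2) s := by
    intro s
    refine (((((hasDerivAt_id' s).const_mul (g' 0)).const_add (g 0)).add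
      ((hasDerivAt_pow 2 s).const_mul (g'' 0 / 2))).add
      ((hasDerivAt_pow 3 s).const_mul (K / 6))).congr_deriv ?_
    push_cast
    ring
  have hg'_le : ∀ s, 0 ≤ s → g' s ≤ g' 0 + g'' 0 * s + K / 2 * s ^ 2 :=
    fun s hs => le_of_hasDerivAt_le_on_Ici hg' hq (by simp) hK hs
  exact le_of_hasDerivAt_le_on_Ici hg hp (by simp) hg'_le ht

theorem DifferentiableAt.hasDerivAt_comp_add_smul {E F : Type*} [NormedAddCommGroup E]
    [NormedSpace ℝ E] [NormedAddCommGroup F] [NormedSpace ℝ F] {f : E → F} {x d : E} {t : ℝ}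
    (hf : DifferentiableAt ℝ f (x + t • d)) :
    HasDerivAt (fun s : ℝ => f (x + s • d)) (fderiv ℝ f (x + t • d) d) t := by
  have hline : HasDerivAt (fun s : ℝ => x + s • d) d t := by
    simpa using ((hasDerivAt_id t).smul_const d).const_add x
  exact hf.hasFDerivAt.comp_hasDerivAt t hline

section CubicBound

variable {E : Type*} [NormedAddCommGroup E] [InnerProductSpace ℝ E]

theorem inner_apply_self_sub_inner_apply_self_le (A B : E →L[ℝ] E) (v : E) :
    ⟪A v, v⟫ - ⟪B v, v⟫ ≤ ‖A - B‖ * ‖v‖ ^ 2 := by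
  calc ⟪A v, v⟫ - ⟪B v, v⟫ = ⟪(A - B) v, v⟫ := by
        rw [sub_apply, inner_sub_left]
    _ ≤ ‖(A - B) v‖ * ‖v‖ := real_inner_le_norm _ _
    _ ≤ ‖A - B‖ * ‖v‖ * ‖v‖ := by gcongr; exact (A - B).le_opNorm v
    _ = ‖A - B‖ * ‖v‖ ^ 2 := by ring

theorem ContDiff.apply_add_le_of_lipschitz_hessian [CompleteSpace E] {φ : E → ℝ}
    (hφ : ContDiff ℝ 2 φ) {L : ℝ}
    (hLip : ∀ u v, ‖fderiv ℝ (∇ φ) u - fderiv ℝ (∇ φ) v‖ ≤ L * ‖u - v‖) (x s : E) :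
    φ (x + s) ≤ φ x + ⟪∇ φ x, s⟫ + ⟪fderiv ℝ (∇ φ) x s, s⟫ / 2 + L / 6 * ‖s‖ ^ 3 := by
  have hφ' : Differentiable ℝ φ := hφ.differentiable (by norm_num)
  have hgrad : Differentiable ℝ (∇ φ) :=
    ((toDual ℝ E).symm.contDiff.comp (hφ.fderiv_right (m := 1) (by norm_num))).differentiable
      (by norm_num)
  have hg : ∀ t : ℝ, HasDerivAt (fun t : ℝ => φ (x + t • s)) ⟪∇ φ (x + t • s), s⟫ t := by
    intro t
    simpa only [inner_gradient_left] using (hφ' _).hasDerivAt_comp_add_smul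
  have hg' : ∀ t : ℝ, HasDerivAt (fun t : ℝ => ⟪∇ φ (x + t • s), s⟫)
      ⟪fderiv ℝ (∇ φ) (x + t • s) s, s⟫ t := by
    intro t
    simpa using ((hgrad _).hasDerivAt_comp_add_smul).inner ℝ (hasDerivAt_const t s)
  have hK : ∀ t : ℝ, 0 ≤ t →
      ⟪fderiv ℝ (∇ φ) (x + t • s) s, s⟫ ≤ ⟪fderiv ℝ (∇ φ) x s, s⟫ + L * ‖s‖ ^ 3 * t := by
    intro t ht
    have hquad := inner_apply_self_sub_inner_apply_self_le (fderiv ℝ (∇ φ) (x + t • s))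
      (fderiv ℝ (∇ φ) x) s
    have hdrift := hLip (x + t • s) x
    rw [add_sub_cancel_left, norm_smul, Real.norm_of_nonneg ht] at hdrift
    have := mul_le_mul_of_nonneg_right hdrift (sq_nonneg ‖s‖)
    linarith
  have := le_taylor_two_add_cubic_of_hasDerivAt hg hg' (by simpa using hK) zero_le_one
  simp only [zero_smul, add_zero, one_smul, one_pow, mul_one] at this
  linarith

end CubicBound

theorem stmt13_general {n : ℕ} (φ : EuclideanSpace ℝ (Fin n) → ℝ) (LH M μ β : ℝ)
    (x d : EuclideanSpace ℝ (Fin n)) (j : ℕ)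
    (hφ : ContDiff ℝ 2 φ) (hLH : 0 < LH) (hβ0 : 0 < β)
    (hLip : ∀ u v, ‖fderiv ℝ (gradient φ) u - fderiv ℝ (gradient φ) v‖ ≤ LH * ‖u - v‖)
    (hdH : (inner ℝ (fderiv ℝ (gradient φ) x d) d : ℝ) = -M * ‖d‖ ^ 3)
    (hdg : (inner ℝ (gradient φ x) d : ℝ) ≤ 0)
    (hfail : φ x - M * μ * β ^ (2 * j) * ‖d‖ ^ 3 < φ (x + β ^ j • d)) :
    3 * M * (1 - 2 * μ) / LH < β ^ j := by
  have hd : d ≠ 0 := by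
    rintro rfl
    simp at hfail
  set T := β ^ j with hT_def
  have hT : 0 < T := pow_pos hβ0 j
  have hcubic := hφ.apply_add_le_of_lipschitz_hessian hLip x (T • d)
  simp only [map_smul, inner_smul_left, inner_smul_right, norm_smul, Real.norm_of_nonneg hT.le,
    conj_trivial, hdH] at hcubic
  rw [pow_mul', ← hT_def] at hfail
  have hscale : 0 < T ^ 2 * ‖d‖ ^ 3 := by positivity
  have hlin : T * ⟪gradient φ x, d⟫ ≤ 0 := mul_nonpos_of_nonneg_of_nonpos hT.le hdg
  rw [div_lt_iff₀ hLH]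
  refine lt_of_mul_lt_mul_left ?_ hscale.le
  linarith

theorem stmt13 {n : ℕ} (φ : EuclideanSpace ℝ (Fin n) → ℝ) (LH M μ β : ℝ)
    (x d : EuclideanSpace ℝ (Fin n)) (j : ℕ)
    (hφ : ContDiff ℝ 2 φ) (hLH : 0 < LH) (hM : 0 < M)
    (hμ0 : 0 < μ) (hμ2 : μ < 1 / 2) (hβ0 : 0 < β) (hβ1 : β < 1)
    (hLip : ∀ u v, ‖fderiv ℝ (gradient φ) u - fderiv ℝ (gradient φ) v‖ ≤ LH * ‖u - v‖)
    (hdH : (inner ℝ (fderiv ℝ (gradient φ) x d) d : ℝ) = -M * ‖d‖ ^ 3)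
    (hdg : (inner ℝ (gradient φ x) d : ℝ) ≤ 0)
    (hfail : φ x - M * μ * β ^ (2 * j) * ‖d‖ ^ 3 < φ (x + β ^ j • d)) :
    3 * M * (1 - 2 * μ) / LH < β ^ j :=
  stmt13_general φ LH M μ β x d j hφ hLH hβ0 hLip hdH hdg hfail
end

section
/- Let $\varphi$ be twice continuously differentiable with $L_H$-Lipschitz Hessian, $x \in \mathbb{R}^n$, $H = \nabla^2\varphi(x)$, $M, \omega > 0$, $\mu \in (0, 1/2)$, $\beta \in (0,1)$, $\tau \in (0,1]$, and suppose $d \in \mathbb{R}^n$ satisfies $d^\top H d \geq -\sqrt{M}\omega\|d\|^2$ and $d^\top\nabla\varphi(x) = -d^\top(H + 2\sqrt{M}\omega I)d$. If for some integer $j \geq 0$ we have $\varphi(x + \tau\beta^j d) - \varphi(x) > \mu\tau\beta^j d^\top\nabla\varphi(x)$, then $\beta^j > \sqrt{\frac{6(1-\mu)\sqrt{M}\omega}{L_H\tau^2\|d\|}}$. -/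
/-!
Along the ray `u ↦ x + u • d` the Lipschitz Hessian gives the cubic upper model
`φ (x + t • d) ≤ φ x + t ⟪∇φ x, d⟫ + t² ⟪H d, d⟫ / 2 + L_H t³ ‖d‖³ / 6`.
If the Armijo test fails at `t = τ β ^ j`, comparing with this model and inserting the
descent identity `⟪∇φ x, d⟫ = -(⟪H d, d⟫ + 2 √M ω ‖d‖²)` leaves
`-(1 - μ - t / 2) (⟪H d, d⟫ + √M ω ‖d‖²) - (1 - μ) √M ω ‖d‖² + L_H t² ‖d‖³ / 6 > 0`;
the first term is nonpositive by the curvature condition and `t ≤ 1 < 2 (1 - μ)`,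
so `6 (1 - μ) √M ω < L_H t² ‖d‖`.
-/

open Set InnerProductSpace

theorem le_add_deriv_add_half_second_deriv_add {f f' f'' : ℝ → ℝ} {C : ℝ}
    (hf : ∀ u, HasDerivAt f (f' u) u) (hf' : ∀ u, HasDerivAt f' (f'' u) u)
    (hC : ∀ u ∈ Ico (0 : ℝ) 1, |f'' u - f'' 0| ≤ C * u) :
    f 1 ≤ f 0 + f' 0 + f'' 0 / 2 + C / 6 := by
  have hpoly₂ : ∀ u : ℝ, HasDerivAt (fun u => f' 0 + u * f'' 0 + C * u ^ 2 / 2)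
      (f'' 0 + C * u) u := fun u =>
    (((hasDerivAt_id u).mul_const _).const_add _).add
      (((hasDerivAt_pow 2 u).const_mul C).div_const 2) |>.congr_deriv (by simp; ring)
  have hpoly₃ : ∀ u : ℝ, HasDerivAt (fun u => f 0 + u * f' 0 + u ^ 2 / 2 * f'' 0 + C * u ^ 3 / 6)
      (f' 0 + u * f'' 0 + C * u ^ 2 / 2) u := fun u =>
    ((((hasDerivAt_id u).mul_const _).const_add _).add
      (((hasDerivAt_pow 2 u).div_const 2).mul_const _)).add
      (((hasDerivAt_pow 3 u).const_mul C).div_const 6) |>.congr_deriv (by simp; ring)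
  have hf'_le : ∀ u ∈ Icc (0 : ℝ) 1, f' u ≤ f' 0 + u * f'' 0 + C * u ^ 2 / 2 :=
    image_le_of_deriv_right_le_deriv_boundary
      (fun u _ => (hf' u).continuousAt.continuousWithinAt)
      (fun u _ => (hf' u).hasDerivWithinAt) (by simp)
      (fun u _ => (hpoly₂ u).continuousAt.continuousWithinAt)
      (fun u _ => (hpoly₂ u).hasDerivWithinAt)
      (fun u hu => by linarith [(abs_le.mp (hC u hu)).2])
  have hf_le := image_le_of_deriv_right_le_deriv_boundary
      (fun u _ => (hf u).continuousAt.continuousWithinAt)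
      (fun u _ => (hf u).hasDerivWithinAt) (by simp)
      (fun u _ => (hpoly₃ u).continuousAt.continuousWithinAt)
      (fun u _ => (hpoly₃ u).hasDerivWithinAt)
      (fun u hu => hf'_le u (Ico_subset_Icc_self hu)) (right_mem_Icc.mpr zero_le_one)
  norm_num at hf_le
  linarith

theorem cubic_upper_bound {E : Type*} [NormedAddCommGroup E] [InnerProductSpace ℝ E]
    [CompleteSpace E] {φ : E → ℝ} {LH : ℝ} (hφ : ContDiff ℝ 2 φ)
    (hLip : ∀ u v, ‖fderiv ℝ (gradient φ) u - fderiv ℝ (gradient φ) v‖ ≤ LH * ‖u - v‖)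
    (x s : E) :
    φ (x + s) ≤ φ x + ⟪gradient φ x, s⟫_ℝ + ⟪fderiv ℝ (gradient φ) x s, s⟫_ℝ / 2
      + LH / 6 * ‖s‖ ^ 3 := by
  set H := fderiv ℝ (gradient φ)
  have hφ_diff : Differentiable ℝ φ := hφ.differentiable (by norm_num)
  have hgrad_diff : Differentiable ℝ (gradient φ) :=
    ((toDual ℝ E).symm.contDiff.comp (hφ.fderiv_right (m := 1) le_rfl)).differentiable
      one_ne_zero
  have hline : ∀ u : ℝ, HasDerivAt (fun u : ℝ => x + u • s) s u := fun u => by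
    simpa using ((hasDerivAt_id u).smul_const s).const_add x
  have hf : ∀ u : ℝ, HasDerivAt (fun u => φ (x + u • s)) ⟪gradient φ (x + u • s), s⟫_ℝ u :=
    fun u => by
      rw [inner_gradient_left]
      exact (hφ_diff _).hasFDerivAt.comp_hasDerivAt u (hline u)
  have hf' : ∀ u : ℝ, HasDerivAt (fun u => ⟪gradient φ (x + u • s), s⟫_ℝ)
      ⟪H (x + u • s) s, s⟫_ℝ u := fun u => by
    simpa using ((hgrad_diff _).hasFDerivAt.comp_hasDerivAt u (hline u)).inner ℝ
      (hasDerivAt_const u s)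
  have hC : ∀ u ∈ Ico (0 : ℝ) 1,
      |⟪H (x + u • s) s, s⟫_ℝ - ⟪H (x + (0 : ℝ) • s) s, s⟫_ℝ| ≤ LH * ‖s‖ ^ 3 * u := by
    intro u hu
    have hHu : ‖H (x + u • s) - H x‖ ≤ LH * (u * ‖s‖) := by
      simpa [norm_smul, abs_of_nonneg hu.1] using hLip (x + u • s) x
    calc |⟪H (x + u • s) s, s⟫_ℝ - ⟪H (x + (0 : ℝ) • s) s, s⟫_ℝ|
        = |⟪(H (x + u • s) - H x) s, s⟫_ℝ| := by simp [inner_sub_left]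
      _ ≤ ‖(H (x + u • s) - H x) s‖ * ‖s‖ := abs_real_inner_le_norm _ _
      _ ≤ ‖H (x + u • s) - H x‖ * ‖s‖ * ‖s‖ := by gcongr; exact ContinuousLinearMap.le_opNorm _ _
      _ ≤ LH * (u * ‖s‖) * ‖s‖ * ‖s‖ := by gcongr
      _ = LH * ‖s‖ ^ 3 * u := by ring
  have := le_add_deriv_add_half_second_deriv_add hf hf' hC
  simp only [zero_smul, add_zero, one_smul] at this
  linarith

theorem lt_of_cubic_model_armijo_fails {LH μ t a D G Q : ℝ} (ht0 : 0 < t)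
    (htμ : t / 2 ≤ 1 - μ) (ha : 0 ≤ a) (hQ : -a * D ^ 2 ≤ Q) (hG : G = -(Q + 2 * a * D ^ 2))
    (hfail : μ * t * G < t * G + t ^ 2 * Q / 2 + LH * t ^ 3 * D ^ 3 / 6) :
    6 * (1 - μ) * a * D ^ 2 < LH * t ^ 2 * D ^ 3 := by
  subst hG
  have hmargin : 0 < -(1 - μ) * (Q + 2 * a * D ^ 2) + t * Q / 2 + LH * t ^ 2 * D ^ 3 / 6 :=
    (pos_iff_pos_of_mul_pos (a := t) (by linarith)).mp ht0
  have hcurv : 0 ≤ (1 - μ - t / 2) * (Q + a * D ^ 2) :=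
    mul_nonneg (by linarith) (by linarith)
  have : 0 ≤ t * a * D ^ 2 := by positivity
  linarith

theorem stmt14_general {n : ℕ} (φ : EuclideanSpace ℝ (Fin n) → ℝ) (LH M ω μ β τ : ℝ)
    (x d : EuclideanSpace ℝ (Fin n)) (j : ℕ)
    (hφ : ContDiff ℝ 2 φ) (hLH : 0 < LH) (hω : 0 < ω)
    (hμ2 : μ < 1 / 2) (hβ0 : 0 < β) (hβ1 : β < 1)
    (hτ0 : 0 < τ) (hτ1 : τ ≤ 1)
    (hLip : ∀ u v, ‖fderiv ℝ (gradient φ) u - fderiv ℝ (gradient φ) v‖ ≤ LH * ‖u - v‖)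
    (hdH : -(Real.sqrt M * ω) * ‖d‖ ^ 2 ≤ (inner ℝ (fderiv ℝ (gradient φ) x d) d : ℝ))
    (hdg : (inner ℝ (gradient φ x) d : ℝ) =
      -((inner ℝ (fderiv ℝ (gradient φ) x d) d : ℝ) + 2 * Real.sqrt M * ω * ‖d‖ ^ 2))
    (hfail : φ x + μ * τ * β ^ j * (inner ℝ (gradient φ x) d : ℝ) < φ (x + (τ * β ^ j) • d)) :
    Real.sqrt (6 * (1 - μ) * Real.sqrt M * ω / (LH * τ ^ 2 * ‖d‖)) < β ^ j := by
  have hβj : 0 < β ^ j := pow_pos hβ0 j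
  have hβj1 : β ^ j ≤ 1 := pow_le_one₀ hβ0.le hβ1.le
  have hmodel := cubic_upper_bound hφ hLip x ((τ * β ^ j) • d)
  simp only [inner_smul_right, map_smul, inner_smul_left, norm_smul, Real.norm_eq_abs,
    abs_of_pos (mul_pos hτ0 hβj), RCLike.conj_to_real] at hmodel
  have key := lt_of_cubic_model_armijo_fails (LH := LH) (μ := μ) (mul_pos hτ0 hβj)
    (by nlinarith) (by positivity) hdH (hdg.trans (by ring)) (by linarith)
  have hD : 0 < ‖d‖ := (norm_nonneg d).lt_of_ne fun h => by simp [← h] at key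
  rw [Real.sqrt_lt' hβj, div_lt_iff₀ (by positivity)]
  nlinarith [key, pow_pos hD 2]

theorem stmt14 {n : ℕ} (φ : EuclideanSpace ℝ (Fin n) → ℝ) (LH M ω μ β τ : ℝ)
    (x d : EuclideanSpace ℝ (Fin n)) (j : ℕ)
    (hφ : ContDiff ℝ 2 φ) (hLH : 0 < LH) (hM : 0 < M) (hω : 0 < ω)
    (hμ0 : 0 < μ) (hμ2 : μ < 1 / 2) (hβ0 : 0 < β) (hβ1 : β < 1)
    (hτ0 : 0 < τ) (hτ1 : τ ≤ 1)
    (hLip : ∀ u v, ‖fderiv ℝ (gradient φ) u - fderiv ℝ (gradient φ) v‖ ≤ LH * ‖u - v‖)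
    (hdH : -(Real.sqrt M * ω) * ‖d‖ ^ 2 ≤ (inner ℝ (fderiv ℝ (gradient φ) x d) d : ℝ))
    (hdg : (inner ℝ (gradient φ x) d : ℝ) =
      -((inner ℝ (fderiv ℝ (gradient φ) x d) d : ℝ) + 2 * Real.sqrt M * ω * ‖d‖ ^ 2))
    (hfail : φ x + μ * τ * β ^ j * (inner ℝ (gradient φ x) d : ℝ) < φ (x + (τ * β ^ j) • d)) :
    Real.sqrt (6 * (1 - μ) * Real.sqrt M * ω / (LH * τ ^ 2 * ‖d‖)) < β ^ j :=
  stmt14_general φ LH M ω μ β τ x d j hφ hLH hω hμ2 hβ0 hβ1 hτ0 hτ1 hLip hdH hdg hfail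
end

section
/- Let $\mathcal{J}^{-1}, \mathcal{J}^0, \mathcal{J}^1$ partition $I_{0,k} = \{0,\dots,k-1\}$ with $|\mathcal{J}^1 \cap I_{0,k}| \leq |\mathcal{J}^{-1} \cap I_{0,k}| + \Gamma$ and hence $k \leq 2|\mathcal{J}^{-1}\cap I_{0,k}| + |\mathcal{J}^0\cap I_{0,k}| + \Gamma$, where $\Gamma \geq 0$. Let $S_k \subseteq I_{0,k}$, $U_k \geq 0$, $J_k - 1 = |S_k|$, $W_k \in \mathbb{R}$, and define $\Sigma_k = |I_{0,k}\cap\mathcal{J}^{-1}| + \max(|S_k\cap\mathcal{J}^0|, |I_{0,k}\cap\mathcal{J}^0| - W_k - U_k J_k)$. Then at least one of the following holds: $\Sigma_k \geq \frac{k}{5(U_k+2)} - \Gamma - 2$, or $W_k \geq \frac{k}{3(U_k+2)}$. -/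
/-!
Write `X` for `|J⁻¹| + max(…)`. Since `|J¹| ≤ |J⁻¹| + Γ` and `S ⊆ J⁻¹ ∪ (S ∩ J⁰) ∪ J¹`, both `k` and
`|S| + 1` are bounded by roughly `2X + Γ + 1`; feeding this into the second entry of the maximum gives
`k ≤ (U + 1)(2X + Γ + 1) + W`. If both conclusions failed, the right-hand side would be less than
`2k/5 + k/6 < k`.
-/

open Finset

theorem Finset.card_le_card_add_card_inter_add_card {α : Type*} [DecidableEq α]
    {A B C T : Finset α} (h : T ⊆ A ∪ B ∪ C) : #T ≤ #A + #(T ∩ B) + #C := by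
  have hT : T ⊆ A ∪ T ∩ B ∪ C := fun x hx => by
    have := h hx
    simp only [mem_union, mem_inter] at this ⊢
    tauto
  calc #T ≤ #(A ∪ T ∩ B ∪ C) := card_le_card hT
    _ ≤ #(A ∪ T ∩ B) + #C := card_union_le _ _
    _ ≤ #A + #(T ∩ B) + #C := by gcongr; exact card_union_le _ _

theorem le_succ_mul_add_of_le_max {k m z p s a M Γ U W : ℝ} (ha : 0 ≤ a) (hU : 0 ≤ U)
    (hk : k ≤ m + z + p) (hp : p ≤ m + Γ) (hs : s ≤ m + a + p)
    (haM : a ≤ M) (hzM : z - W - U * (s + 1) ≤ M) :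
    k ≤ (U + 1) * (2 * (m + M) + Γ + 1) + W := by
  have hs' : s + 1 ≤ 2 * (m + M) + Γ + 1 := by linarith
  linarith [mul_le_mul_of_nonneg_left hs' hU]

theorem sub_le_or_le_of_le_succ_mul_add {k X Γ U W : ℝ} (hX : 0 ≤ X) (hΓ : 0 ≤ Γ) (hU : 0 ≤ U)
    (hk : k ≤ (U + 1) * (2 * X + Γ + 1) + W) :
    k / (5 * (U + 2)) - Γ - 2 ≤ X ∨ k / (3 * (U + 2)) ≤ W := by
  by_contra! h
  obtain ⟨hX', hW⟩ := h
  have hD : 0 < U + 2 := by linarith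
  rw [lt_sub_iff_add_lt, lt_sub_iff_add_lt, lt_div_iff₀ (by positivity)] at hX'
  rw [lt_div_iff₀ (by positivity)] at hW
  have hk0 : 0 ≤ k := by nlinarith
  nlinarith [mul_nonneg hU hk0, mul_nonneg hU hX, mul_nonneg hU hΓ]

theorem stmt16_general (k : ℕ) (Jm J0 J1 S : Finset ℕ) (Γ U W : ℝ)
    (hΓ : 0 ≤ Γ) (hU : 0 ≤ U)
    (hunion : Jm ∪ J0 ∪ J1 = Finset.range k)
    (hcard : (J1.card : ℝ) ≤ (Jm.card : ℝ) + Γ)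
    (hS : S ⊆ Finset.range k) :
    (k : ℝ) / (5 * (U + 2)) - Γ - 2 ≤
      (Jm.card : ℝ) +
        max (((S ∩ J0).card : ℝ)) ((J0.card : ℝ) - W - U * ((S.card : ℝ) + 1)) ∨
    (k : ℝ) / (3 * (U + 2)) ≤ W := by
  have hk : k ≤ #Jm + #J0 + #J1 := by
    calc k = #(Jm ∪ J0 ∪ J1) := by rw [hunion, card_range]
      _ ≤ #(Jm ∪ J0) + #J1 := card_union_le _ _
      _ ≤ #Jm + #J0 + #J1 := by gcongr; exact card_union_le _ _
  have hSk : #S ≤ #Jm + #(S ∩ J0) + #J1 :=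
    card_le_card_add_card_inter_add_card (hunion ▸ hS)
  apply sub_le_or_le_of_le_succ_mul_add (by positivity) hΓ hU
  exact le_succ_mul_add_of_le_max (by positivity) hU (by exact_mod_cast hk) hcard
    (by exact_mod_cast hSk) (le_max_left _ _) (le_max_right _ _)

theorem stmt16 (k : ℕ) (Jm J0 J1 S : Finset ℕ) (Γ U W : ℝ)
    (hΓ : 0 ≤ Γ) (hU : 0 ≤ U)
    (hd1 : Disjoint Jm J0) (hd2 : Disjoint Jm J1) (hd3 : Disjoint J0 J1)
    (hunion : Jm ∪ J0 ∪ J1 = Finset.range k)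
    (hcard : (J1.card : ℝ) ≤ (Jm.card : ℝ) + Γ)
    (hS : S ⊆ Finset.range k) :
    (k : ℝ) / (5 * (U + 2)) - Γ - 2 ≤
      (Jm.card : ℝ) +
        max (((S ∩ J0).card : ℝ)) ((J0.card : ℝ) - W - U * ((S.card : ℝ) + 1)) ∨
    (k : ℝ) / (3 * (U + 2)) ≤ W :=
  stmt16_general k Jm J0 J1 S Γ U W hΓ hU hunion hcard hS
end
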